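/- arXiv:2006.14472 — 7 statements merged into one kernel-verified Lean document; each statement's English description precedes it below -/
import Mathlib

section
/- Fix K,p>0, ε∈[0,1], and z*,z>0. Define the expected reward v(0) as the initial value of the solution v to λ*(r)(1-r)v'(r) - ((1-β)/(2c̃))z²G_z(r)v(r) + ((1-β)/(2c̃))z²G_z(r)² = 0 with v(1)=0, where G_z(r)=K(1+p)(1-r)^p z^{-ε} and λ*(r)=((1-β)/(2c̃))(z*)²G_{z*}(r). Then v(0)=K(1+p)z^{-ε}·[1+p(z/z*)^{ε-2}]^{-1}. -/
/-- The expected reward of a deviating team of size `z` when all other teams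
have size `z*`: the solution of the linear ODE with terminal value 0 has
initial value `K(1+p) z^{-ε} [1 + p (z/z*)^{ε-2}]⁻¹`. -/
theorem expected_reward_deviating_team
    (K p ε z zs ct β : ℝ) (hK : 0 < K) (hp : 0 < p)
    (hε : ε ∈ Set.Icc (0:ℝ) 1) (hz : 0 < z) (hzs : 0 < zs)
    (hct : 0 < ct) (hβ : β ∈ Set.Ico (0:ℝ) 1)
    (Gz Gzs lamstar : ℝ → ℝ)
    (hGz : ∀ r : ℝ, Gz r = K * (1 + p) * (1 - r) ^ p * z ^ (-ε))
    (hGzs : ∀ r : ℝ, Gzs r = K * (1 + p) * (1 - r) ^ p * zs ^ (-ε))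
    (hlam : ∀ r : ℝ, lamstar r = (1 - β) / (2 * ct) * zs ^ 2 * Gzs r)
    (v v' : ℝ → ℝ)
    (hvcont : ContinuousOn v (Set.Icc (0:ℝ) 1))
    (hderiv : ∀ r ∈ Set.Ico (0:ℝ) 1, HasDerivAt v (v' r) r)
    (hODE : ∀ r ∈ Set.Ico (0:ℝ) 1,
      lamstar r * (1 - r) * v' r
        - (1 - β) / (2 * ct) * z ^ 2 * Gz r * v r
        + (1 - β) / (2 * ct) * z ^ 2 * (Gz r) ^ 2 = 0)
    (hterm : v 1 = 0) :
    v 0 = K * (1 + p) * z ^ (-ε) * (1 + p * (z / zs) ^ (ε - 2))⁻¹ := by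
  obtain ⟨hε0, hε1⟩ := hε
  obtain ⟨hβ0, hβ1⟩ := hβ
  have hapos : (0:ℝ) < (1 - β) / (2 * ct) := div_pos (by linarith) (by linarith)
  have hKp : (0:ℝ) < K * (1 + p) := by positivity
  have hzzs : 0 < z / zs := div_pos hz hzs
  set c : ℝ := (z / zs) ^ ((2:ℝ) - ε) with hc
  have hcpos : 0 < c := Real.rpow_pos_of_pos hzzs _
  set A : ℝ := K * (1 + p) * z ^ (-ε) * (1 + p * (z / zs) ^ (ε - 2))⁻¹ with hA
  -- inverse relation between the two exponents
  have hinv : (z / zs) ^ (ε - 2) = c⁻¹ := by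
    rw [hc, ← Real.rpow_neg hzzs.le]
    ring_nf
  have hArel : A * (c + p) = c * (K * (1 + p) * z ^ (-ε)) := by
    have hden : (1 + p * (z / zs) ^ (ε - 2)) = (c + p) / c := by
      rw [hinv]; field_simp
    rw [hA, hden]
    have hcp : c + p > 0 := by linarith
    field_simp
  -- relation c * zs^{2-ε} = z^{2-ε}
  have hc2 : c * (zs ^ 2 * zs ^ (-ε)) = z ^ 2 * z ^ (-ε) := by
    have hz2 : z ^ 2 * z ^ (-ε) = z ^ ((2:ℝ) - ε) := by
      rw [← Real.rpow_natCast z 2, ← Real.rpow_add hz]; congr 1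
    have hzs2 : zs ^ 2 * zs ^ (-ε) = zs ^ ((2:ℝ) - ε) := by
      rw [← Real.rpow_natCast zs 2, ← Real.rpow_add hzs]; congr 1
    rw [hz2, hzs2, hc, Real.div_rpow hz.le hzs.le]
    have : zs ^ ((2:ℝ) - ε) ≠ 0 := (Real.rpow_pos_of_pos hzs _).ne'
    field_simp
  -- simplified ODE
  have hkey : ∀ r ∈ Set.Ico (0:ℝ) 1,
      (1 - r) * v' r = c * (v r - K * (1 + p) * (1 - r) ^ p * z ^ (-ε)) := by
    intro r hr
    have hr1 : (0:ℝ) < 1 - r := by linarith [hr.2]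
    have hq : (0:ℝ) < (1 - r) ^ p := Real.rpow_pos_of_pos hr1 _
    have h := hODE r hr
    rw [hlam r, hGzs r, hGz r] at h
    have hb : (1 - β) / (2 * ct) * (K * (1 + p)) * ((1 - r) ^ p) ≠ 0 :=
      (mul_pos (mul_pos hapos hKp) hq).ne'
    have h3 : (1 - β) / (2 * ct) * (K * (1 + p)) * ((1 - r) ^ p) *
        (zs ^ 2 * zs ^ (-ε) * ((1 - r) * v' r)
          - z ^ 2 * z ^ (-ε) * (v r - K * (1 + p) * (1 - r) ^ p * z ^ (-ε))) = 0 := by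
      linear_combination h
    have h4 : zs ^ 2 * zs ^ (-ε) * ((1 - r) * v' r)
        = z ^ 2 * z ^ (-ε) * (v r - K * (1 + p) * (1 - r) ^ p * z ^ (-ε)) := by
      rcases mul_eq_zero.1 h3 with h5 | h5
      · exact absurd h5 hb
      · linarith [h5]
    have hW : zs ^ 2 * zs ^ (-ε) ≠ 0 :=
      (mul_pos (pow_pos hzs 2) (Real.rpow_pos_of_pos hzs _)).ne'
    apply mul_left_cancel₀ hW
    linear_combination h4 - (v r - K * (1 + p) * (1 - r) ^ p * z ^ (-ε)) * hc2
  -- the comparison function g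
  set g : ℝ → ℝ := fun x => (v x - A * (1 - x) ^ p) * (1 - x) ^ c with hg
  have hgcont : ContinuousOn g (Set.Icc (0:ℝ) 1) := by
    have cP : Continuous fun x : ℝ => (1 - x) ^ p :=
      (continuous_const.sub continuous_id).rpow_const (fun x => Or.inr hp.le)
    have cC : Continuous fun x : ℝ => (1 - x) ^ c :=
      (continuous_const.sub continuous_id).rpow_const (fun x => Or.inr hcpos.le)
    exact ((hvcont.sub ((continuous_const.mul cP).continuousOn)).mul cC.continuousOn)
  have hgderiv : ∀ x ∈ Set.Ico (0:ℝ) 1, HasDerivAt g 0 x := by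
    intro r hr
    have hr1 : (0:ℝ) < 1 - r := by linarith [hr.2]
    have hlin : HasDerivAt (fun x : ℝ => 1 - x) (-1) r := by
      simpa using (hasDerivAt_id r).const_sub 1
    have hP : HasDerivAt (fun x : ℝ => (1 - x) ^ p) (p * (1 - r) ^ (p - 1) * (-1)) r :=
      (Real.hasDerivAt_rpow_const (x := 1 - r) (p := p) (Or.inl hr1.ne')).comp r hlin
    have hC : HasDerivAt (fun x : ℝ => (1 - x) ^ c) (c * (1 - r) ^ (c - 1) * (-1)) r :=
      (Real.hasDerivAt_rpow_const (x := 1 - r) (p := c) (Or.inl hr1.ne')).comp r hlin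
    have hD : HasDerivAt g
        ((v' r - A * (p * (1 - r) ^ (p - 1) * (-1))) * (1 - r) ^ c
          + (v r - A * (1 - r) ^ p) * (c * (1 - r) ^ (c - 1) * (-1))) r :=
      ((hderiv r hr).sub ((hP.const_mul A))).mul hC
    have e1 : (1 - r) ^ c = (1 - r) * (1 - r) ^ (c - 1) := by
      have h := Real.rpow_add hr1 1 (c - 1)
      have h1 : 1 + (c - 1) = c := by ring
      rw [h1] at h
      simpa [Real.rpow_one] using h
    have e2 : (1 - r) ^ p = (1 - r) * (1 - r) ^ (p - 1) := by
      have h := Real.rpow_add hr1 1 (p - 1)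
      have h1 : 1 + (p - 1) = p := by ring
      rw [h1] at h
      simpa [Real.rpow_one] using h
    have hz0 : (v' r - A * (p * (1 - r) ^ (p - 1) * (-1))) * (1 - r) ^ c
          + (v r - A * (1 - r) ^ p) * (c * (1 - r) ^ (c - 1) * (-1)) = 0 := by
      linear_combination (v' r + A * p * (1 - r) ^ (p - 1)) * e1
        - A * p * (1 - r) ^ (c - 1) * e2
        + (1 - r) ^ (c - 1) * (hkey r hr)
        + (1 - r) ^ (c - 1) * (1 - r) ^ p * hArel
    rw [← hz0]
    exact hD
  have hconst := constant_of_has_deriv_right_zero hgcont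
    (fun x hx => (hgderiv x hx).hasDerivWithinAt) 1 (by norm_num)
  have hg1 : g 1 = 0 := by
    simp [hg, Real.zero_rpow hcpos.ne']
  have hg0 : g 0 = v 0 - A := by
    simp [hg, Real.one_rpow]
  rw [hg1, hg0] at hconst
  linarith [hconst]
end

section
/- Let p>0, ε∈[0,1], δ>0 with δ ≥ (2-ε)p/(1+p). Define f(x)=x^{2-ε}/(x^{2-ε}+p) - ((2-ε)p/(δ(1+p)²))x^δ for x≥0. Then f attains its global maximum on [0,∞) at x=1. -/
/-! With `a = 2 - ε` and `c = a p / (δ (1 + p)²)`,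
`f 1 - f x = p (δ (1 + p) (1 - x^a) - a (x^a + p) (1 - x^δ)) / (δ (1 + p)² (x^a + p))`,
so it suffices that `a (x^a + p) (1 - x^δ) ≤ δ (1 + p) (1 - x^a)`. Substituting `u = x^δ`,
`r = a / δ` turns this into `r (u^r + p) (1 - u) ≤ (1 + p) (1 - u^r)` under `p (r - 1) ≤ 1`,
which follows from weighted AM-GM (Bernoulli's inequality): directly when `r ≤ 1`, and when
`r > 1` through the identity
`(r - 1) (RHS - LHS) = r u ((r - 1) u^r - r u^(r-1) + 1) + (1 - p (r - 1)) (u^r - r u + r - 1)`,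
both of whose brackets are nonnegative by AM-GM. -/

open Real

/-- Weighted AM-GM, via Bernoulli's inequality. -/
lemma mul_rpow_le_mul_rpow_add_sub {x a b : ℝ} (hx : 0 ≤ x) (ha : 0 < a) (hab : a ≤ b) :
    b * x ^ a ≤ a * x ^ b + (b - a) := by
  have bernoulli : 1 + b / a * (x ^ a - 1) ≤ x ^ b := by
    have h := one_add_mul_self_le_rpow_one_add (s := x ^ a - 1)
      (by linarith [rpow_nonneg hx a]) ((one_le_div ha).2 hab)
    rwa [add_sub_cancel, ← rpow_mul hx, mul_div_cancel₀ _ ha.ne'] at h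
  calc b * x ^ a = a * (1 + b / a * (x ^ a - 1)) + (b - a) := by field_simp; ring
    _ ≤ a * x ^ b + (b - a) := by gcongr

lemma mul_rpow_add_mul_one_sub_le_of_le_one {u r p : ℝ} (hu : 0 ≤ u) (hr : 0 < r)
    (hr1 : r ≤ 1) (hp : 0 ≤ p) :
    r * (u ^ r + p) * (1 - u) ≤ (1 + p) * (1 - u ^ r) := by
  have amgm := mul_rpow_le_mul_rpow_add_sub hu hr hr1
  rw [rpow_one] at amgm
  have hur : 0 ≤ u ^ r := rpow_nonneg hu r
  rcases le_total u 1 with hu1 | hu1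
  · have : u ^ r ≤ 1 := rpow_le_one hu hu1 hr.le
    nlinarith [mul_le_mul_of_nonneg_left this (sub_nonneg.2 hu1)]
  · have : 1 ≤ u ^ r := one_le_rpow hu1 hr.le
    nlinarith [mul_le_mul_of_nonneg_left this (sub_nonneg.2 hu1)]

lemma mul_rpow_add_mul_one_sub_le_of_one_lt {u r p : ℝ} (hu : 0 ≤ u) (hr : 1 < r)
    (hpr : p * (r - 1) ≤ 1) :
    r * (u ^ r + p) * (1 - u) ≤ (1 + p) * (1 - u ^ r) := by
  have tangent : r * u ≤ u ^ r + (r - 1) := by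
    simpa using mul_rpow_le_mul_rpow_add_sub hu one_pos hr.le
  have amgm : r * u ^ (r - 1) ≤ (r - 1) * u ^ r + 1 := by
    simpa using mul_rpow_le_mul_rpow_add_sub hu (sub_pos.2 hr) (sub_le_self r one_pos.le)
  have hu_r : u ^ r = u ^ (r - 1) * u := by
    rw [← rpow_add_one' hu (by linarith), sub_add_cancel]
  have identity : (r - 1) * ((1 + p) * (1 - u ^ r) - r * (u ^ r + p) * (1 - u)) =
      r * u * ((r - 1) * u ^ r - r * u ^ (r - 1) + 1)
        + (1 - p * (r - 1)) * (u ^ r + (r - 1) - r * u) := by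
    rw [hu_r]; ring
  have : 0 ≤ (r - 1) * ((1 + p) * (1 - u ^ r) - r * (u ^ r + p) * (1 - u)) := by
    rw [identity]
    have := mul_nonneg (mul_nonneg (by linarith : 0 ≤ r) hu)
      (by linarith : 0 ≤ (r - 1) * u ^ r - r * u ^ (r - 1) + 1)
    nlinarith [mul_nonneg (sub_nonneg.2 hpr) (by linarith : 0 ≤ u ^ r + (r - 1) - r * u)]
  nlinarith [(mul_nonneg_iff_of_pos_left (sub_pos.2 hr)).1 this]

lemma mul_rpow_add_mul_one_sub_rpow_le {x a δ p : ℝ} (hx : 0 ≤ x) (ha : 0 < a) (hδ : 0 < δ)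
    (hp : 0 ≤ p) (hcond : a * p ≤ δ * (1 + p)) :
    a * (x ^ a + p) * (1 - x ^ δ) ≤ δ * (1 + p) * (1 - x ^ a) := by
  set r := a / δ
  have hxa : x ^ a = (x ^ δ) ^ r := by rw [← rpow_mul hx, mul_div_cancel₀ _ hδ.ne']
  have key : r * ((x ^ δ) ^ r + p) * (1 - x ^ δ) ≤ (1 + p) * (1 - (x ^ δ) ^ r) := by
    have hu := rpow_nonneg hx δ
    rcases le_or_gt r 1 with hr | hr
    · exact mul_rpow_add_mul_one_sub_le_of_le_one hu (by positivity) hr hp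
    · refine mul_rpow_add_mul_one_sub_le_of_one_lt hu hr ?_
      rw [div_sub_one hδ.ne', mul_div_assoc', div_le_one hδ]
      linarith
  calc a * (x ^ a + p) * (1 - x ^ δ) = δ * (r * ((x ^ δ) ^ r + p) * (1 - x ^ δ)) := by
        rw [← hxa]; simp only [r]; field_simp
    _ ≤ δ * ((1 + p) * (1 - (x ^ δ) ^ r)) := by gcongr
    _ = δ * (1 + p) * (1 - x ^ a) := by rw [← hxa]; ring

/-- Under the condition `δ ≥ (2-ε)p/(1+p)`, the function
`f(x) = x^{2-ε}/(x^{2-ε}+p) - ((2-ε)p/(δ(1+p)²)) x^δ` attains its global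
maximum on `[0,∞)` at `x = 1`. -/
theorem manager_f_max_at_one
    (p ε δ : ℝ) (hp : 0 < p) (hε : ε ∈ Set.Icc (0:ℝ) 1) (hδ : 0 < δ)
    (hcond : (2 - ε) * p / (1 + p) ≤ δ) :
    ∀ x : ℝ, 0 ≤ x →
      x ^ (2 - ε) / (x ^ (2 - ε) + p) - (2 - ε) * p / (δ * (1 + p) ^ 2) * x ^ δ
        ≤ (1:ℝ) ^ (2 - ε) / ((1:ℝ) ^ (2 - ε) + p)
            - (2 - ε) * p / (δ * (1 + p) ^ 2) * (1:ℝ) ^ δ := by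
  intro x hx
  have ha : 0 < 2 - ε := by linarith [hε.2]
  have hcond' : (2 - ε) * p ≤ δ * (1 + p) := by rwa [div_le_iff₀ (by linarith)] at hcond
  have key := mul_rpow_add_mul_one_sub_rpow_le hx ha hδ hp.le hcond'
  have hden : 0 < x ^ (2 - ε) + p := by positivity
  have gap : (1:ℝ) / (1 + p) - (2 - ε) * p / (δ * (1 + p) ^ 2)
        - (x ^ (2 - ε) / (x ^ (2 - ε) + p) - (2 - ε) * p / (δ * (1 + p) ^ 2) * x ^ δ) =
      p * (δ * (1 + p) * (1 - x ^ (2 - ε)) - (2 - ε) * (x ^ (2 - ε) + p) * (1 - x ^ δ))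
        / (δ * (1 + p) ^ 2 * (x ^ (2 - ε) + p)) := by
    field_simp; ring
  rw [one_rpow, one_rpow, mul_one, ← sub_nonneg, gap]
  exact div_nonneg (mul_nonneg hp.le (sub_nonneg.2 key)) (by positivity)
end

section
/- Let K,k,κ₀>0, β∈[0,1), ε∈(0,1), δ≥1, and K(1+β)/2 > k+κ₀. Then the equation (-εK(1+β)/2)z^{1-ε} + κ₀ - k(δ-1)z^δ = 0 has a unique positive root. -/
/-- Central planner, mixed scheme `0<ε<1`, `δ≥1`, `κ₀>0`, `K(1+β)/2 > k+κ₀`: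
the first-order-condition equation has a unique positive root. -/
theorem central_planner_unique_root
    (K k κ₀ β ε δ : ℝ) (hK : 0 < K) (hk : 0 < k) (hκ : 0 < κ₀)
    (hβ : β ∈ Set.Ico (0:ℝ) 1) (hε : 0 < ε) (hε1 : ε < 1) (hδ : 1 ≤ δ)
    (hcond : k + κ₀ < K * (1 + β) / 2) :
    ∃! z : ℝ, 0 < z ∧
      -(ε * K * (1 + β)) / 2 * z ^ (1 - ε) + κ₀ - k * (δ - 1) * z ^ δ = 0 := by
  obtain ⟨hβ0, hβ1⟩ := hβ
  set p : ℝ := 1 - ε with hp_def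
  have hp : 0 < p := by simp only [hp_def]; linarith
  set c1 : ℝ := ε * K * (1 + β) / 2 with hc1_def
  have hc1 : 0 < c1 := by
    apply div_pos _ (by norm_num : (0:ℝ) < 2)
    nlinarith
  set c2 : ℝ := k * (δ - 1) with hc2_def
  have hc2 : 0 ≤ c2 := mul_nonneg hk.le (by linarith)
  set g : ℝ → ℝ := fun z => c1 * z ^ p + c2 * z ^ δ with hg_def
  have hequiv : ∀ z : ℝ,
      (-(ε * K * (1 + β)) / 2 * z ^ (1 - ε) + κ₀ - k * (δ - 1) * z ^ δ = 0) ↔ g z = κ₀ := by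
    intro z
    have h1 : -(ε * K * (1 + β)) / 2 * z ^ (1 - ε) = -(c1 * z ^ p) := by
      rw [hc1_def, hp_def]; ring
    simp only [hg_def, hc2_def, h1]
    constructor <;> intro h <;> linarith
  -- strict monotonicity on positives
  have hmono : ∀ x y : ℝ, 0 < x → x < y → g x < g y := by
    intro x y hx hxy
    have h1 : c1 * x ^ p < c1 * y ^ p :=
      mul_lt_mul_of_pos_left (Real.rpow_lt_rpow hx.le hxy hp) hc1
    have h2 : c2 * x ^ δ ≤ c2 * y ^ δ :=
      mul_le_mul_of_nonneg_left (Real.rpow_le_rpow hx.le hxy.le (by linarith)) hc2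
    simpa [hg_def] using add_lt_add_of_lt_of_le h1 h2
  -- continuity
  have hcont : Continuous g := by
    have h1 : Continuous fun z : ℝ => z ^ p := by
      rw [continuous_iff_continuousAt]
      exact fun x => Real.continuousAt_rpow_const x p (Or.inr hp.le)
    have h2 : Continuous fun z : ℝ => z ^ δ := by
      rw [continuous_iff_continuousAt]
      exact fun x => Real.continuousAt_rpow_const x δ (Or.inr (by linarith))
    exact (continuous_const.mul h1).add (continuous_const.mul h2)
  -- endpoints
  have hc12 : 0 < c1 + c2 := by linarith
  set s : ℝ := (κ₀ / (2 * (c1 + c2))) ^ p⁻¹ with hs_def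
  have hs : 0 < s := Real.rpow_pos_of_pos (by positivity) _
  set a : ℝ := min 1 s with ha_def
  have ha0 : 0 < a := lt_min one_pos hs
  have ha1 : a ≤ 1 := min_le_left _ _
  have hsp : s ^ p = κ₀ / (2 * (c1 + c2)) :=
    Real.rpow_inv_rpow (by positivity) hp.ne'
  have hga : g a < κ₀ := by
    have h1 : a ^ δ ≤ a ^ p :=
      Real.rpow_le_rpow_of_exponent_ge ha0 ha1 (by linarith)
    have h2 : a ^ p ≤ s ^ p := Real.rpow_le_rpow ha0.le (min_le_right _ _) hp.le
    have h3 : g a ≤ (c1 + c2) * a ^ p := by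
      simp only [hg_def]
      nlinarith [Real.rpow_nonneg ha0.le p]
    have h4 : (c1 + c2) * a ^ p ≤ (c1 + c2) * s ^ p :=
      mul_le_mul_of_nonneg_left h2 hc12.le
    rw [hsp] at h4
    have : (c1 + c2) * (κ₀ / (2 * (c1 + c2))) = κ₀ / 2 := by
      field_simp
    linarith
  set r : ℝ := (2 * κ₀ / c1) ^ p⁻¹ with hr_def
  have hr : 0 < r := Real.rpow_pos_of_pos (by positivity) _
  set b : ℝ := max 1 r with hb_def
  have hb1 : (1:ℝ) ≤ b := le_max_left _ _
  have hb0 : 0 < b := lt_of_lt_of_le one_pos hb1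
  have hrp : r ^ p = 2 * κ₀ / c1 := Real.rpow_inv_rpow (by positivity) hp.ne'
  have hgb : κ₀ < g b := by
    have h1 : r ^ p ≤ b ^ p := Real.rpow_le_rpow hr.le (le_max_right _ _) hp.le
    rw [hrp] at h1
    have h2 : c1 * (2 * κ₀ / c1) ≤ c1 * b ^ p := mul_le_mul_of_nonneg_left h1 hc1.le
    have h3 : c1 * (2 * κ₀ / c1) = 2 * κ₀ := by field_simp
    have h4 : 0 ≤ c2 * b ^ δ := mul_nonneg hc2 (Real.rpow_nonneg hb0.le δ)
    simp only [hg_def]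
    nlinarith
  have hab : a ≤ b := le_trans ha1 hb1
  have hmem : κ₀ ∈ Set.Icc (g a) (g b) := ⟨hga.le, hgb.le⟩
  obtain ⟨z, hz_mem, hz_eq⟩ := intermediate_value_Icc hab hcont.continuousOn hmem
  have hz0 : 0 < z := lt_of_lt_of_le ha0 hz_mem.1
  refine ⟨z, ⟨hz0, (hequiv z).mpr hz_eq⟩, ?_⟩
  rintro y ⟨hy0, hy_eq⟩
  have hgy : g y = κ₀ := (hequiv y).mp hy_eq
  rcases lt_trichotomy y z with h | h | h
  · exact absurd (hmono y z hy0 h) (by rw [hgy, hz_eq]; exact lt_irrefl _)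
  · exact h
  · exact absurd (hmono z y hz0 h) (by rw [hgy, hz_eq]; exact lt_irrefl _)
end

section
/- Let K,p,k>0, κ₀>0, β∈[0,1), δ≥2, with K(1+β)/(2(p+1)) < κ₀. Define z_p*=((κ₀ - K(1+β)/(2(p+1)))/(k(δ-1)))^{1/δ} and V^p = (K(1+β)/2)(z_p*)^{-1} - κ₀(z_p*)^{-1} - k(z_p*)^{δ-1}. Then V^p ≥ 0 if and only if κ₀ ≤ (K(1+β)/(2(1+p)))·(1+(δ-1)(1+p))/δ. -/
/-- Partnership, budget allocation scheme (ε=1): the equilibrium worker value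
is nonnegative iff `κ₀ ≤ (K(1+β)/(2(1+p)))·(1+(δ-1)(1+p))/δ`. -/
theorem partnership_budget_value_nonneg_iff
    (K p k κ₀ β δ : ℝ) (hK : 0 < K) (hp : 0 < p) (hk : 0 < k) (hκ : 0 < κ₀)
    (hβ : β ∈ Set.Ico (0:ℝ) 1) (hδ : 2 ≤ δ)
    (hcond : K * (1 + β) / (2 * (p + 1)) < κ₀)
    (zp Vp : ℝ)
    (hzp : zp = ((κ₀ - K * (1 + β) / (2 * (p + 1))) / (k * (δ - 1))) ^ (1/δ))
    (hVp : Vp = K * (1 + β) / 2 * zp⁻¹ - κ₀ * zp⁻¹ - k * zp ^ (δ - 1)) :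
    0 ≤ Vp ↔ κ₀ ≤ K * (1 + β) / (2 * (1 + p)) * ((1 + (δ - 1) * (1 + p)) / δ) := by
  obtain ⟨hβ0, hβ1⟩ := hβ
  have hp1 : (0:ℝ) < p + 1 := by linarith
  have hδ1 : (0:ℝ) < δ - 1 := by linarith
  have hδ0 : (0:ℝ) < δ := by linarith
  set A := K * (1 + β) / (2 * (p + 1)) with hA
  have hA0 : 0 < A := by rw [hA]; positivity
  have hnum : 0 < κ₀ - A := by linarith
  have hB0 : 0 < (κ₀ - A) / (k * (δ - 1)) := by positivity
  have hzp0 : 0 < zp := by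
    rw [hzp]; exact Real.rpow_pos_of_pos hB0 _
  have hzd : zp ^ δ = (κ₀ - A) / (k * (δ - 1)) := by
    rw [hzp, ← Real.rpow_mul hB0.le, one_div, inv_mul_cancel₀ hδ0.ne', Real.rpow_one]
  have hKA : K * (1 + β) = A * (2 * (p + 1)) := by
    rw [hA]; field_simp
  have hVz : Vp * zp = A * (p + 1) - κ₀ - (κ₀ - A) / (δ - 1) := by
    rw [hVp, Real.rpow_sub hzp0, Real.rpow_one, hzd, hKA]
    field_simp
  have hiff : (0:ℝ) ≤ Vp ↔ 0 ≤ Vp * zp := by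
    constructor
    · intro h; exact mul_nonneg h hzp0.le
    · intro h; exact nonneg_of_mul_nonneg_right (by rwa [mul_comm] at h) hzp0
  rw [hiff, hVz]
  have hL : (0 ≤ A * (p + 1) - κ₀ - (κ₀ - A) / (δ - 1)) ↔
      κ₀ - A ≤ (A * (p + 1) - κ₀) * (δ - 1) := by
    rw [sub_nonneg, div_le_iff₀ hδ1]
  have hR : (κ₀ ≤ K * (1 + β) / (2 * (1 + p)) * ((1 + (δ - 1) * (1 + p)) / δ)) ↔
      κ₀ * δ * (2 * (1 + p)) ≤ A * (2 * (p + 1)) * (1 + (δ - 1) * (1 + p)) := by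
    rw [hKA, mul_div_assoc', le_div_iff₀ hδ0, div_mul_eq_mul_div,
      le_div_iff₀ (by positivity : (0:ℝ) < 2 * (1 + p))]
  rw [hL, hR]
  constructor
  · intro h
    nlinarith [mul_le_mul_of_nonneg_right h (by positivity : (0:ℝ) ≤ 2 * (p + 1))]
  · intro h
    nlinarith [h, hp1, mul_pos hp1 hδ1]
end

section
/- Let p≥1/3, δ≥3, and A,B,C>0 with B=(p+1)²A (i.e. A=pK(1+β)/(p+1), B=pK(1+p)(1+β)). Define h(x)=Bx³ + [C - (A+C)x^δ](p+x²)² for x>0. Then h(1)=0 and h'(1)<0, and for every x̄>0 with h(x̄)=0 one has h'(x̄)<0; consequently x=1 is the unique positive zero of h. -/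
/-!
At a positive zero `x` of `h`, eliminating `x ^ δ` by means of `h x = 0` turns `x (p + x²) h'(x)`
into `(3 - δ) B x³ (p + x²) - δ C (p + x²)³ - 4 B x⁵`, which is negative for `δ ≥ 3`. A continuous
function whose derivative is negative at each of its zeros in an interval can only cross zero
downwards, so it has at most one zero there; and `h 1 = 0` is exactly `B = (p + 1)² A`.
-/
open Filter Set Topology

section

variable {f : ℝ → ℝ}

lemma eventually_nhdsLT_pos_of_deriv_neg {x₀ : ℝ} (hf : deriv f x₀ < 0) (hx₀ : f x₀ = 0) :
    ∀ᶠ x in 𝓝[<] x₀, 0 < f x := by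
  filter_upwards [nhdsWithin_le_nhds (eventually_nhdsWithin_sign_eq_of_deriv_neg hf hx₀),
    self_mem_nhdsWithin] with x hsign (hx : x < x₀)
  rw [← sign_eq_one_iff, hsign, sign_eq_one_iff]
  exact sub_pos.2 hx

lemma eventually_nhdsGT_neg_of_deriv_neg {x₀ : ℝ} (hf : deriv f x₀ < 0) (hx₀ : f x₀ = 0) :
    ∀ᶠ x in 𝓝[>] x₀, f x < 0 := by
  filter_upwards [nhdsWithin_le_nhds (eventually_nhdsWithin_sign_eq_of_deriv_neg hf hx₀),
    self_mem_nhdsWithin] with x hsign (hx : x₀ < x)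
  rw [← sign_eq_neg_one_iff, hsign, sign_eq_neg_one_iff]
  exact sub_neg.2 hx

lemma exists_last_zero_of_pos {a b : ℝ} (hab : a ≤ b) (hf : ContinuousOn f (Icc a b))
    (ha : f a = 0) (hb : 0 < f b) : ∃ c ∈ Ico a b, f c = 0 ∧ ∀ y ∈ Ioc c b, 0 < f y := by
  set S := Icc a b ∩ f ⁻¹' {0}
  have hbdd : BddAbove S := ⟨b, fun y hy => hy.1.2⟩
  obtain ⟨⟨hac, hcb⟩, hc⟩ : sSup S ∈ S :=
    (hf.preimage_isClosed_of_isClosed isClosed_Icc isClosed_singleton).csSup_mem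
      ⟨a, left_mem_Icc.2 hab, ha⟩ hbdd
  refine ⟨sSup S, ⟨hac, hcb.lt_of_ne fun h => ?_⟩, hc, fun y hy => ?_⟩
  · exact hb.ne' (h ▸ hc)
  · by_contra! hy₀
    obtain ⟨z, hz, hz₀⟩ := intermediate_value_Icc hy.2
      (hf.mono (Icc_subset_Icc (hac.trans hy.1.le) le_rfl)) ⟨hy₀, hb.le⟩
    have : z ≤ sSup S := le_csSup hbdd ⟨⟨hac.trans (hy.1.le.trans hz.1), hz.2⟩, hz₀⟩
    linarith [hy.1, hz.1]

theorem subsingleton_zeros_of_deriv_neg {s : Set ℝ} (hs : s.OrdConnected)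
    (hf : ContinuousOn f s) (hderiv : ∀ x ∈ s, f x = 0 → deriv f x < 0) :
    (s ∩ f ⁻¹' {0}).Subsingleton := by
  intro x ⟨hxs, hx₀⟩ y ⟨hys, hy₀⟩
  wlog hxy : x < y generalizing x y
  · rcases (not_lt.1 hxy).eq_or_lt with h | h
    · exact h.symm
    · exact (this hys hy₀ hxs hx₀ h).symm
  exfalso
  -- `f > 0` just left of `y`; the last zero `c` before such a point has `f > 0` just right of it
  obtain ⟨b, hb_pos, hb⟩ := ((eventually_nhdsLT_pos_of_deriv_neg (hderiv y hys hy₀) hy₀).and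
    (Ioo_mem_nhdsLT hxy)).exists
  have hxb : Icc x b ⊆ s := (Icc_subset_Icc le_rfl hb.2.le).trans (hs.out hxs hys)
  obtain ⟨c, hc, hc₀, hpos⟩ := exists_last_zero_of_pos hb.1.le (hf.mono hxb) hx₀ hb_pos
  have hcs : c ∈ s := hxb (Ico_subset_Icc_self hc)
  obtain ⟨z, hz_neg, hz⟩ := ((eventually_nhdsGT_neg_of_deriv_neg (hderiv c hcs hc₀) hc₀).and
    (Ioo_mem_nhdsGT hc.2)).exists
  exact (hpos z (Ioo_subset_Ioc_self hz)).not_gt hz_neg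

end

noncomputable def partnershipSign (p δ A B C x : ℝ) : ℝ :=
  B * x ^ 3 + (C - (A + C) * x ^ δ) * (p + x ^ 2) ^ 2

section

variable {p δ A B C x : ℝ}

lemma hasDerivAt_partnershipSign (hx : x ≠ 0 ∨ 1 ≤ δ) :
    HasDerivAt (partnershipSign p δ A B C) (3 * B * x ^ 2
      - δ * (A + C) * x ^ (δ - 1) * (p + x ^ 2) ^ 2
      + 4 * x * (p + x ^ 2) * (C - (A + C) * x ^ δ)) x := by
  refine (((hasDerivAt_pow 3 x).const_mul B).fun_add
    ((((Real.hasDerivAt_rpow_const hx).const_mul (A + C)).const_sub C).fun_mul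
      (((hasDerivAt_pow 2 x).const_add p).fun_pow 2))).congr_deriv ?_
  push_cast
  ring

lemma partnershipSign_one (hB : B = (p + 1) ^ 2 * A) : partnershipSign p δ A B C 1 = 0 := by
  rw [partnershipSign, Real.one_rpow]
  linear_combination hB

lemma deriv_partnershipSign_neg_of_eq_zero (hp : 0 < p) (hδ : 3 ≤ δ) (hB : 0 < B) (hC : 0 < C)
    (hx : 0 < x) (hzero : partnershipSign p δ A B C x = 0) :
    deriv (partnershipSign p δ A B C) x < 0 := by
  set s := p + x ^ 2
  have hs : 0 < s := by positivity
  have hxδ : x ^ (δ - 1) * x = x ^ δ := by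
    rw [← Real.rpow_add_one hx.ne', sub_add_cancel]
  -- `hzero` replaces `(A + C) x ^ δ s²` by `C s² + B x³`
  have key : x * s * deriv (partnershipSign p δ A B C) x =
      (3 - δ) * B * x ^ 3 * s - δ * C * s ^ 3 - 4 * B * x ^ 5 := by
    rw [(hasDerivAt_partnershipSign (.inl hx.ne')).deriv]
    rw [partnershipSign] at hzero
    linear_combination (-(A + C) * δ * s ^ 3) * hxδ + (δ * s + 4 * x ^ 2) * hzero
  have hrhs : (3 - δ) * B * x ^ 3 * s - δ * C * s ^ 3 - 4 * B * x ^ 5 < 0 := by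
    nlinarith [mul_pos (mul_pos hB (pow_pos hx 3)) hs, pow_pos hs 3, pow_pos hx 5,
      mul_pos hC (pow_pos hs 3)]
  exact neg_of_mul_neg_right (key ▸ hrhs) (by positivity)

end

theorem partnership_sign_function_unique_zero_general
    (p δ A B C : ℝ) (hppos : 0 < p) (hδ : 3 ≤ δ)
    (hA : 0 < A) (hC : 0 < C) (hB : B = (p + 1) ^ 2 * A) :
    let h : ℝ → ℝ := fun x => B * x ^ 3 + (C - (A + C) * x ^ δ) * (p + x ^ 2) ^ 2
    h 1 = 0 ∧
    deriv h 1 < 0 ∧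
    (∀ x : ℝ, 0 < x → h x = 0 → deriv h x < 0) ∧
    (∀ x : ℝ, 0 < x → h x = 0 → x = 1) := by
  change let h := partnershipSign p δ A B C; _
  intro h
  have hB₀ : 0 < B := hB ▸ by positivity
  have h₁ : h 1 = 0 := partnershipSign_one hB
  have hderiv : ∀ x, 0 < x → h x = 0 → deriv h x < 0 := fun x hx =>
    deriv_partnershipSign_neg_of_eq_zero hppos hδ hB₀ hC hx
  have hcont : ContinuousOn h (Ioi 0) := fun x hx =>
    (hasDerivAt_partnershipSign (.inl (ne_of_gt hx))).continuousAt.continuousWithinAt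
  have huniq := subsingleton_zeros_of_deriv_neg ordConnected_Ioi hcont hderiv
  exact ⟨h₁, hderiv 1 one_pos h₁, hderiv, fun x hx hx₀ => huniq ⟨hx, hx₀⟩ ⟨mem_Ioi.2 one_pos, h₁⟩⟩

/-- Public good scheme (ε=0) partnership verification: the sign function
`h(x) = Bx³ + [C-(A+C)x^δ](p+x²)²` has `x=1` as its unique positive zero, with
negative derivative at every positive zero. -/
theorem partnership_sign_function_unique_zero
    (p δ A B C : ℝ) (hp : 1/3 ≤ p) (hppos : 0 < p) (hδ : 3 ≤ δ)
    (hA : 0 < A) (hC : 0 < C) (hB : B = (p + 1) ^ 2 * A) :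
    let h : ℝ → ℝ := fun x => B * x ^ 3 + (C - (A + C) * x ^ δ) * (p + x ^ 2) ^ 2
    h 1 = 0 ∧
    deriv h 1 < 0 ∧
    (∀ x : ℝ, 0 < x → h x = 0 → deriv h x < 0) ∧
    (∀ x : ℝ, 0 < x → h x = 0 → x = 1) :=
  partnership_sign_function_unique_zero_general p δ A B C hppos hδ hA hC hB
end

section
/- Let K,κ₀,k>0, δ>1, ε∈[0,1], p>0, and define α(ε,p)=1-ε-(2-ε)/(2(p+1)). For β∈[0,1), any positive equilibrium partnership team size z_p*(β) satisfies Kα(ε,p)(1+β)(z_p*)^{1-ε} = -κ₀ + k(δ-1)(z_p*)^δ, and this equation has at most one positive solution. Moreover α(ε,p)>0 iff 2p-2pε-ε>0, and in that case z_p*(β) is increasing in β; if 2p-2pε-ε=0 then z_p*(β) is constant in β; if 2p-2pε-ε<0 then z_p*(β) is decreasing in β. -/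
/-- Monotonicity of the partnership equilibrium team size in β
(Proposition 1 of the paper). -/
theorem partnership_size_monotone_in_beta
    (K κ₀ k δ ε p : ℝ) (hK : 0 < K) (hκ : 0 < κ₀) (hk : 0 < k)
    (hδ : 1 < δ) (hε : ε ∈ Set.Icc (0:ℝ) 1) (hp : 0 < p) :
    let α : ℝ := 1 - ε - (2 - ε) / (2 * (p + 1))
    -- uniqueness of a positive solution of the first-order condition
    (∀ β ∈ Set.Ico (0:ℝ) 1, ∀ z₁ z₂ : ℝ, 0 < z₁ → 0 < z₂ →
      K * α * (1 + β) * z₁ ^ (1 - ε) = -κ₀ + k * (δ - 1) * z₁ ^ δ →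
      K * α * (1 + β) * z₂ ^ (1 - ε) = -κ₀ + k * (δ - 1) * z₂ ^ δ →
      z₁ = z₂) ∧
    (0 < α ↔ 0 < 2 * p - 2 * p * ε - ε) ∧
    (∀ (A : Set ℝ), A ⊆ Set.Ico (0:ℝ) 1 →
      ∀ zp : ℝ → ℝ,
      (∀ β ∈ A, 0 < zp β ∧
        K * α * (1 + β) * (zp β) ^ (1 - ε) = -κ₀ + k * (δ - 1) * (zp β) ^ δ) →
      ((0 < 2 * p - 2 * p * ε - ε → StrictMonoOn zp A) ∧
       (2 * p - 2 * p * ε - ε = 0 → ∀ β₁ ∈ A, ∀ β₂ ∈ A, zp β₁ = zp β₂) ∧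
       (2 * p - 2 * p * ε - ε < 0 → StrictAntiOn zp A))) := by
  obtain ⟨hε0, hε1⟩ := hε
  intro α
  have h2p : (0:ℝ) < 2 * (p + 1) := by linarith
  have hαval : α = (2 * p - 2 * p * ε - ε) / (2 * (p + 1)) := by
    show (1 - ε - (2 - ε) / (2 * (p + 1)) : ℝ) = _
    field_simp
    ring
  have hkd : 0 < k * (δ - 1) := by
    have : 0 < δ - 1 := by linarith
    positivity
  -- the transformed equation
  have key : ∀ β z : ℝ, 0 < z →
      K * α * (1 + β) * z ^ (1 - ε) = -κ₀ + k * (δ - 1) * z ^ δ →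
      K * α * (1 + β) = k * (δ - 1) * z ^ (δ - 1 + ε) - κ₀ * z ^ (ε - 1) := by
    intro β z hz h
    have h1 : z ^ (1 - ε) * z ^ (ε - 1) = 1 := by
      rw [← Real.rpow_add hz]
      norm_num
    have h2 : z ^ δ * z ^ (ε - 1) = z ^ (δ - 1 + ε) := by
      rw [← Real.rpow_add hz]
      congr 1
      ring
    linear_combination z ^ (ε - 1) * h - (K * α * (1 + β)) * h1 + (k * (δ - 1)) * h2
  -- strict monotonicity of the transformed right-hand side
  have Hlt : ∀ x y : ℝ, 0 < x → 0 < y → x < y →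
      k * (δ - 1) * x ^ (δ - 1 + ε) - κ₀ * x ^ (ε - 1) <
        k * (δ - 1) * y ^ (δ - 1 + ε) - κ₀ * y ^ (ε - 1) := by
    intro x y hx hy hxy
    have h1 : x ^ (δ - 1 + ε) < y ^ (δ - 1 + ε) :=
      Real.rpow_lt_rpow hx.le hxy (by linarith)
    have h2 : y ^ (ε - 1) ≤ x ^ (ε - 1) :=
      Real.rpow_le_rpow_of_nonpos hx hxy.le (by linarith)
    nlinarith [mul_lt_mul_of_pos_left h1 hkd, mul_le_mul_of_nonneg_left h2 hκ.le]
  -- injectivity at fixed level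
  have Hinj : ∀ c : ℝ, ∀ z₁ z₂ : ℝ, 0 < z₁ → 0 < z₂ →
      c = k * (δ - 1) * z₁ ^ (δ - 1 + ε) - κ₀ * z₁ ^ (ε - 1) →
      c = k * (δ - 1) * z₂ ^ (δ - 1 + ε) - κ₀ * z₂ ^ (ε - 1) →
      z₁ = z₂ := by
    intro c z₁ z₂ h1 h2 e1 e2
    rcases lt_trichotomy z₁ z₂ with h | h | h
    · have := Hlt z₁ z₂ h1 h2 h
      rw [← e1, ← e2] at this
      exact absurd this (lt_irrefl c)
    · exact h
    · have := Hlt z₂ z₁ h2 h1 h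
      rw [← e1, ← e2] at this
      exact absurd this (lt_irrefl c)
  have hα_iff : 0 < α ↔ 0 < 2 * p - 2 * p * ε - ε := by
    rw [hαval]
    constructor
    · intro h
      by_contra hc
      push_neg at hc
      have : (2 * p - 2 * p * ε - ε) / (2 * (p + 1)) ≤ 0 :=
        div_nonpos_of_nonpos_of_nonneg hc h2p.le
      linarith
    · intro h
      exact div_pos h h2p
  refine ⟨?_, hα_iff, ?_⟩
  · intro β _ z₁ z₂ h1 h2 e1 e2
    exact Hinj (K * α * (1 + β)) z₁ z₂ h1 h2 (key β z₁ h1 e1) (key β z₂ h2 e2)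
  · intro A hA zp hzp
    have hform : ∀ β ∈ A, K * α * (1 + β) =
        k * (δ - 1) * (zp β) ^ (δ - 1 + ε) - κ₀ * (zp β) ^ (ε - 1) := by
      intro β hβ
      exact key β (zp β) (hzp β hβ).1 (hzp β hβ).2
    -- from ordering of levels to ordering of z's
    have hlev : ∀ β₁ ∈ A, ∀ β₂ ∈ A,
        K * α * (1 + β₁) < K * α * (1 + β₂) → zp β₁ < zp β₂ := by
      intro β₁ hβ₁ β₂ hβ₂ hlt
      by_contra hc
      push_neg at hc
      rcases eq_or_lt_of_le hc with h | h
      · rw [hform β₁ hβ₁, hform β₂ hβ₂, h] at hlt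
        exact lt_irrefl _ hlt
      · have := Hlt (zp β₂) (zp β₁) (hzp β₂ hβ₂).1 (hzp β₁ hβ₁).1 h
        rw [← hform β₁ hβ₁, ← hform β₂ hβ₂] at this
        linarith
    refine ⟨?_, ?_, ?_⟩
    · intro hsign β₁ hβ₁ β₂ hβ₂ hβlt
      have hαpos : 0 < α := hα_iff.2 hsign
      have hb1 : 0 ≤ β₁ := (hA hβ₁).1
      have hKα : 0 < K * α := mul_pos hK hαpos
      exact hlev β₁ hβ₁ β₂ hβ₂ (by nlinarith)
    · intro hsign β₁ hβ₁ β₂ hβ₂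
      have hα0 : α = 0 := by rw [hαval, hsign]; simp
      have e1 := hform β₁ hβ₁
      have e2 := hform β₂ hβ₂
      rw [hα0] at e1 e2
      simp only [mul_zero, zero_mul] at e1 e2
      exact Hinj 0 (zp β₁) (zp β₂) (hzp β₁ hβ₁).1 (hzp β₂ hβ₂).1 e1 e2
    · intro hsign β₁ hβ₁ β₂ hβ₂ hβlt
      have hαneg : α < 0 := by
        rw [hαval]
        exact div_neg_of_neg_of_pos hsign h2p
      have hb1 : 0 ≤ β₁ := (hA hβ₁).1
      have hKα : K * α < 0 := mul_neg_of_pos_of_neg hK hαneg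
      exact hlev β₂ hβ₂ β₁ hβ₁ (by nlinarith)
end

section
/- Let K,κ₀,k>0, δ>1, ε∈[0,1], p>0, β∈[0,1) and suppose z_p*(β)>0 satisfies Kα(ε,p)(1+β)(z_p*)^{1-ε} = -κ₀ + k(δ-1)(z_p*)^δ with α(ε,p)=1-ε-(2-ε)/(2(p+1)). Define V^p(β)=(K(1+β)/2)(z_p*(β))^{-ε} - (κ₀ + k(z_p*(β))^δ)/z_p*(β). If either 2p-2pε-ε≤0, or 2p-2pε-ε>0 and p(2-ε)/((p+1)(δ+ε-1))≤1, then (d/dβ)V^p(β) ≥ 0, i.e. the equilibrium worker value is nondecreasing in β. -/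
/-!
Write `z = z_p*(β)`, `α = α(ε,p)` and `c = ε + 2α = p(2-ε)/(p+1)`. Substituting the first-order
condition into the chain rule gives `V'(β) = K z^(-ε-1)/2 · (z - c(1+β) z')`, and implicit
differentiation of the condition gives `z' D = Kα z^(1-ε) z` with
`D = k(δ-1)(δ+ε-1) z^δ + (1-ε)κ₀ > 0`. Hence `V'(β) ≥ 0` iff `c E ≤ D`, where
`E = Kα(1+β) z^(1-ε) = k(δ-1) z^δ - κ₀` and `D = (δ+ε-1) E + δκ₀`: either `E ≤ 0 ≤ c`,
or `0 ≤ E` and `c ≤ δ+ε-1`, which is exactly the dichotomy assumed.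
-/

open Set

theorem HasDerivAt.eq_zero_of_eqOn_zero {𝕜 F : Type*} [NontriviallyNormedField 𝕜]
    [NormedAddCommGroup F] [NormedSpace 𝕜 F] {f : 𝕜 → F} {f' : F} {x : 𝕜} {s : Set 𝕜}
    (hf : HasDerivAt f f' x) (hs : UniqueDiffWithinAt 𝕜 s x) (hx : x ∈ s) (h0 : EqOn f 0 s) :
    f' = 0 :=
  hs.eq_deriv s hf.hasDerivWithinAt ((hasDerivWithinAt_const x s 0).congr h0 (h0 hx))

section Partnership

variable {K κ₀ k δ ε a β z' : ℝ} {zp : ℝ → ℝ}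

theorem hasDerivAt_partnership_value (hz : 0 < zp β) (hz' : HasDerivAt zp z' β)
    (hfoc : K * a * (1 + β) * zp β ^ (1 - ε) = -κ₀ + k * (δ - 1) * zp β ^ δ) :
    HasDerivAt (fun b : ℝ => K * (1 + b) / 2 * zp b ^ (-ε) - (κ₀ + k * zp b ^ δ) / zp b)
      (K * zp β ^ (-ε - 1) / 2 * (zp β - (1 + β) * (ε + 2 * a) * z')) β := by
  have hlin : HasDerivAt (fun b : ℝ => K * (1 + b) / 2) (K / 2) β := by
    simpa using (((hasDerivAt_id β).const_add 1).const_mul K).div_const 2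
  have hV := (hlin.mul (hz'.rpow_const (p := -ε) (Or.inl hz.ne'))).sub
    (((hz'.rpow_const (p := δ) (Or.inl hz.ne')).const_mul k).const_add κ₀ |>.div hz' hz.ne')
  refine hV.congr_deriv ?_
  set z := zp β
  have hpow : ∀ r : ℝ, z ^ (r - 1) = z ^ r / z := Real.rpow_sub_one hz.ne'
  rw [hpow, hpow, show -ε = (1 - ε) - 1 by ring, hpow]
  field_simp
  linear_combination 2 * z' * hfoc

theorem partnership_foc_implicit_deriv {s : Set ℝ} (hs : UniqueDiffWithinAt ℝ s β) (hβ : β ∈ s)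
    (hfoc : ∀ b ∈ s, K * a * (1 + b) * zp b ^ (1 - ε) = -κ₀ + k * (δ - 1) * zp b ^ δ)
    (hz : 0 < zp β) (hz' : HasDerivAt zp z' β) :
    z' * (k * (δ - 1) * (δ + ε - 1) * zp β ^ δ + (1 - ε) * κ₀) = K * a * zp β ^ (1 - ε) * zp β := by
  have hlin : HasDerivAt (fun b : ℝ => K * a * (1 + b)) (K * a) β := by
    simpa using ((hasDerivAt_id β).const_add 1).const_mul (K * a)
  have hG := (hlin.mul (hz'.rpow_const (p := 1 - ε) (Or.inl hz.ne'))).sub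
    (((hz'.rpow_const (p := δ) (Or.inl hz.ne')).const_mul (k * (δ - 1))).const_add (-κ₀))
  have hG0 := hG.eq_zero_of_eqOn_zero hs hβ fun b hb => sub_eq_zero.mpr (hfoc b hb)
  set z := zp β
  have hpow : ∀ r : ℝ, z ^ (r - 1) = z ^ r / z := Real.rpow_sub_one hz.ne'
  rw [hpow, hpow] at hG0
  field_simp at hG0
  linear_combination -hG0 + (1 - ε) * z' * hfoc β hβ

end Partnership

theorem mul_sub_le_of_cases {κ₀ δ ε c y : ℝ} (hκ : 0 ≤ κ₀) (hε : ε ≤ 1) (hδε : 0 ≤ δ + ε - 1)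
    (hy : 0 ≤ y) (hcase : (y ≤ κ₀ ∧ 0 ≤ c) ∨ (κ₀ ≤ y ∧ c ≤ δ + ε - 1)) :
    c * (y - κ₀) ≤ (δ + ε - 1) * y + (1 - ε) * κ₀ := by
  rcases hcase with ⟨hyκ, hc⟩ | ⟨hκy, hc⟩
  · nlinarith [mul_nonneg hc (sub_nonneg.mpr hyκ), mul_nonneg hδε hy,
      mul_nonneg (sub_nonneg.mpr hε) hκ]
  · nlinarith [mul_le_mul_of_nonneg_right hc (sub_nonneg.mpr hκy)]

theorem sub_mul_nonneg_of_mul_eq {z z' D M c β : ℝ} (hz : 0 < z) (hD : 0 < D)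
    (himp : z' * D = M * z) (hcM : c * ((1 + β) * M) ≤ D) : 0 ≤ z - (1 + β) * c * z' := by
  have hfactor : (z - (1 + β) * c * z') * D = z * (D - c * ((1 + β) * M)) := by
    linear_combination -(1 + β) * c * himp
  exact nonneg_of_mul_nonneg_left (hfactor ▸ mul_nonneg hz.le (sub_nonneg.mpr hcM)) hD

theorem eps_add_two_mul_alpha {ε p : ℝ} (hp : p + 1 ≠ 0) :
    ε + 2 * (1 - ε - (2 - ε) / (2 * (p + 1))) = p * (2 - ε) / (p + 1) := by
  field_simp
  ring

theorem alpha_sign_cases {δ ε p : ℝ} (hp : 0 ≤ p) (hε : ε ≤ 2) (hδε : 0 < δ + ε - 1)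
    (hcase : 2 * p - 2 * p * ε - ε ≤ 0 ∨
      (0 < 2 * p - 2 * p * ε - ε ∧ p * (2 - ε) / ((p + 1) * (δ + ε - 1)) ≤ 1)) :
    (1 - ε - (2 - ε) / (2 * (p + 1)) ≤ 0 ∧ 0 ≤ p * (2 - ε) / (p + 1)) ∨
      (0 ≤ 1 - ε - (2 - ε) / (2 * (p + 1)) ∧ p * (2 - ε) / (p + 1) ≤ δ + ε - 1) := by
  have hp1 : 0 < p + 1 := by linarith
  have hα : 1 - ε - (2 - ε) / (2 * (p + 1)) = (2 * p - 2 * p * ε - ε) / (2 * (p + 1)) := by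
    field_simp
    ring
  rw [hα]
  rcases hcase with h | ⟨hpos, hle⟩
  · exact Or.inl ⟨div_nonpos_of_nonpos_of_nonneg h (by positivity),
      div_nonneg (mul_nonneg hp (by linarith)) hp1.le⟩
  · refine Or.inr ⟨div_nonneg hpos.le (by positivity), ?_⟩
    rw [div_le_one (by positivity)] at hle
    rw [div_le_iff₀ hp1]
    linarith

theorem foc_mul_le_curvature {K κ₀ k δ ε a c β z : ℝ} (hK : 0 ≤ K) (hκ : 0 ≤ κ₀) (hk : 0 ≤ k)
    (hδ : 1 ≤ δ) (hε : ε ≤ 1) (hδε : 0 ≤ δ + ε - 1) (hβ : 0 ≤ 1 + β) (hz : 0 < z)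
    (hfoc : K * a * (1 + β) * z ^ (1 - ε) = -κ₀ + k * (δ - 1) * z ^ δ)
    (hcase : (a ≤ 0 ∧ 0 ≤ c) ∨ (0 ≤ a ∧ c ≤ δ + ε - 1)) :
    c * ((1 + β) * (K * a * z ^ (1 - ε))) ≤
      k * (δ - 1) * (δ + ε - 1) * z ^ δ + (1 - ε) * κ₀ := by
  have hE : (1 + β) * (K * a * z ^ (1 - ε)) = k * (δ - 1) * z ^ δ - κ₀ := by
    linear_combination hfoc
  have hM : 0 ≤ (1 + β) * K * z ^ (1 - ε) := by positivity
  have hE' : (1 + β) * K * z ^ (1 - ε) * a = k * (δ - 1) * z ^ δ - κ₀ := by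
    linear_combination hE
  have hy : 0 ≤ k * (δ - 1) * z ^ δ := by
    have : 0 ≤ δ - 1 := by linarith
    positivity
  have key := mul_sub_le_of_cases hκ hε hδε hy <| by
    rcases hcase with ⟨ha, hc⟩ | ⟨ha, hc⟩
    · exact Or.inl ⟨sub_nonpos.mp (hE' ▸ mul_nonpos_of_nonneg_of_nonpos hM ha), hc⟩
    · exact Or.inr ⟨sub_nonneg.mp (hE' ▸ mul_nonneg hM ha), hc⟩
  rw [hE]
  linarith

/-- The partnership equilibrium worker value is nondecreasing in β
(Proposition 2 of the paper): its derivative in β is nonnegative. -/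
theorem partnership_value_monotone_in_beta
    (K κ₀ k δ ε p : ℝ) (hK : 0 < K) (hκ : 0 < κ₀) (hk : 0 < k)
    (hδ : 1 < δ) (hε : ε ∈ Set.Icc (0:ℝ) 1) (hp : 0 < p)
    (hcase : 2 * p - 2 * p * ε - ε ≤ 0 ∨
      (0 < 2 * p - 2 * p * ε - ε ∧ p * (2 - ε) / ((p + 1) * (δ + ε - 1)) ≤ 1))
    (zp : ℝ → ℝ)
    (hdiff : ∀ β ∈ Set.Ico (0:ℝ) 1, DifferentiableAt ℝ zp β)
    (hzp : ∀ β ∈ Set.Ico (0:ℝ) 1, 0 < zp β ∧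
      K * (1 - ε - (2 - ε) / (2 * (p + 1))) * (1 + β) * (zp β) ^ (1 - ε)
        = -κ₀ + k * (δ - 1) * (zp β) ^ δ) :
    ∀ β ∈ Set.Ico (0:ℝ) 1,
      0 ≤ deriv (fun b : ℝ =>
        K * (1 + b) / 2 * (zp b) ^ (-ε) - (κ₀ + k * (zp b) ^ δ) / zp b) β := by
  obtain ⟨hε0, hε1⟩ := hε
  intro β hβ
  obtain ⟨hz, hfoc⟩ := hzp β hβ
  have hz' := (hdiff β hβ).hasDerivAt
  have hδε : 0 < δ + ε - 1 := by linarith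
  have himp := partnership_foc_implicit_deriv (uniqueDiffOn_Ico 0 1 β hβ) hβ
    (fun b hb => (hzp b hb).2) hz hz'
  have hD : 0 < k * (δ - 1) * (δ + ε - 1) * zp β ^ δ + (1 - ε) * κ₀ := by
    have : 0 < δ - 1 := by linarith
    have : 0 ≤ 1 - ε := by linarith
    positivity
  have hcE := foc_mul_le_curvature hK.le hκ.le hk.le hδ.le hε1 hδε.le (by linarith [hβ.1]) hz hfoc
    (alpha_sign_cases hp.le (by linarith) hδε hcase)
  rw [(hasDerivAt_partnership_value hz hz' hfoc).deriv, eps_add_two_mul_alpha (by linarith)]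
  exact mul_nonneg (by positivity) (sub_mul_nonneg_of_mul_eq hz hD himp hcE)
end
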